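/- Let F = F₁ × F_{log} ⊆ ℝ², where F₁ = {0} ∪ {1/k : k ≥ 1} and F_{log} = {0} ∪ {1/log k : k ≥ 2}. Then for θ ∈ (0,1], the lower and upper θ-intermediate dimensions of F equal θ/(1+θ) + 1, the Hausdorff dimension of F is 0, and the box dimension of F is 3/2. -/

import Mathlib

open Set

noncomputable section

/-- There is a countable cover of `F` by sets whose diameters all lie between `lo` and `hi`,
with `s`-power diameter sum at most `ε`. -/
def ICov {X : Type} [PseudoEMetricSpace X] (F : Set X) (s lo hi ε : ℝ) : Prop :=
  ∃ (ι : Type) (_ : Countable ι) (U : ι → Set X), F ⊆ ⋃ i, U i ∧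
    (∀ i, ENNReal.ofReal lo ≤ EMetric.diam (U i) ∧ EMetric.diam (U i) ≤ ENNReal.ofReal hi) ∧
    ∑' i, EMetric.diam (U i) ^ s ≤ ENNReal.ofReal ε

/-- There is a countable cover of `F` with no diameter restrictions and
`s`-power diameter sum at most `ε`. -/
def HCov {X : Type} [PseudoEMetricSpace X] (F : Set X) (s ε : ℝ) : Prop :=
  ∃ (ι : Type) (_ : Countable ι) (U : ι → Set X), F ⊆ ⋃ i, U i ∧
    ∑' i, EMetric.diam (U i) ^ s ≤ ENNReal.ofReal ε

/-- The lower `θ`-intermediate dimension. -/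
def lowerIDim {X : Type} [PseudoEMetricSpace X] (F : Set X) (θ : ℝ) : ℝ :=
  if θ = 0 then sInf {s : ℝ | 0 ≤ s ∧ ∀ ε > 0, HCov F s ε}
  else sInf {s : ℝ | 0 ≤ s ∧ ∀ ε > 0, ∀ δ₀ > 0, ∃ δ : ℝ, 0 < δ ∧ δ ≤ δ₀ ∧
    ICov F s (δ ^ (1 / θ)) δ ε}

/-- The upper `θ`-intermediate dimension. -/
def upperIDim {X : Type} [PseudoEMetricSpace X] (F : Set X) (θ : ℝ) : ℝ :=
  if θ = 0 then sInf {s : ℝ | 0 ≤ s ∧ ∀ ε > 0, HCov F s ε}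
  else sInf {s : ℝ | 0 ≤ s ∧ ∀ ε > 0, ∃ δ₀ > (0:ℝ), ∀ δ : ℝ, 0 < δ → δ ≤ δ₀ →
    ICov F s (δ ^ (1 / θ)) δ ε}

/-- A countable cover of `F` by sets all of diameter exactly `δ`,
with `s`-power diameter sum at most `ε`. -/
def EqCov {X : Type} [PseudoEMetricSpace X] (F : Set X) (s δ ε : ℝ) : Prop :=
  ∃ (ι : Type) (_ : Countable ι) (U : ι → Set X), F ⊆ ⋃ i, U i ∧
    (∀ i, EMetric.diam (U i) = ENNReal.ofReal δ) ∧
    ∑' i, EMetric.diam (U i) ^ s ≤ ENNReal.ofReal ε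

/-- The lower box dimension. -/
def lowerBoxDim {X : Type} [PseudoEMetricSpace X] (F : Set X) : ℝ :=
  sInf {s : ℝ | 0 ≤ s ∧ ∀ ε > 0, ∀ δ₀ > 0, ∃ δ : ℝ, 0 < δ ∧ δ ≤ δ₀ ∧ EqCov F s δ ε}

/-- The upper box dimension. -/
def upperBoxDim {X : Type} [PseudoEMetricSpace X] (F : Set X) : ℝ :=
  sInf {s : ℝ | 0 ≤ s ∧ ∀ ε > 0, ∃ δ₀ > (0:ℝ), ∀ δ : ℝ, 0 < δ → δ ≤ δ₀ → EqCov F s δ ε}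

/-- The Assouad dimension. -/
def assouadDim {X : Type} [PseudoEMetricSpace X] (F : Set X) : ℝ :=
  sInf {s : ℝ | 0 ≤ s ∧ ∃ C > (0:ℝ), ∀ x ∈ F, ∀ r R : ℝ, 0 < r → r < R →
    ∃ t : Finset (Set X), (F ∩ EMetric.closedBall x (ENNReal.ofReal R) ⊆ ⋃ U ∈ t, U) ∧
      (∀ U ∈ t, EMetric.diam U ≤ ENNReal.ofReal r) ∧ (t.card : ℝ) ≤ C * (R / r) ^ s}

end

/-- The set `{0} ∪ {1 / log k : k ∈ ℕ, k ≥ 2}`. -/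
noncomputable def Flog : Set ℝ :=
  insert 0 {x : ℝ | ∃ k : ℕ, 2 ≤ k ∧ x = 1 / Real.log k}

/-- The set `{0} ∪ {1/k : k ∈ ℕ, k ≥ 1}`. -/
noncomputable def F1 : Set ℝ :=
  insert 0 {x : ℝ | ∃ k : ℕ, 1 ≤ k ∧ x = 1 / (k : ℝ)}

/-- The product set `F1 × Flog` as a subset of the Euclidean plane. -/
noncomputable def Fprod : Set (EuclideanSpace ℝ (Fin 2)) :=
  {z : EuclideanSpace ℝ (Fin 2) | z 0 ∈ F1 ∧ z 1 ∈ Flog}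


/-!
At scale `δ`, the admissible covers use sets of diameter between `δ^(1/θ)` and `δ`. Upper bound:
cover the columns `{1/k} × F_log`, `k ≤ δ^(-1/(1+θ))`, by squares of the smallest admissible
diameter `δ^(1/θ)`, and the remaining strip `[0, δ^(1/(1+θ))] × [0, 2]` by squares of diameter
`δ`; both families have `s`-cost `O(δ^(s - 1 - θ/(1+θ)))`.

Lower bound: `F₁` contains `≈ δ^(-1/(1+θ))` points that are `δ^(2/(1+θ))/16`-separated, and
`F_log` contains, up to a logarithmic loss, `≈ δ^(-1/θ)` points that are `δ^(1/θ)`-separated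
(the points `1/log k` are spaced by `≈ t² e^(-1/t)` near `t`). For `s < 1 + θ/(1+θ)` a set of
admissible diameter `d` contains at most `O(d^s)` of the grid points, counted as a proportion,
so the mass distribution principle bounds `∑ diam^s` from below.

The box dimensions are the intermediate dimensions at `θ = 1`, and `F` is countable.
-/

set_option linter.deprecated false

open Filter Topology
open scoped ENNReal

section Covers

variable {X : Type} [PseudoEMetricSpace X] {F G : Set X} {s lo hi ε : ℝ}

theorem ICov.mono {ε' : ℝ} (hFG : F ⊆ G) (hε : ε ≤ ε') :
    ICov G s lo hi ε → ICov F s lo hi ε' := by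
  rintro ⟨ι, hι, U, hcov, hdiam, hsum⟩
  exact ⟨ι, hι, U, hFG.trans hcov, hdiam, hsum.trans (ENNReal.ofReal_le_ofReal hε)⟩

theorem ICov.mono_exponent {s' : ℝ} (hs : s ≤ s') (hhi : hi ≤ 1) :
    ICov F s lo hi ε → ICov F s' lo hi ε := by
  rintro ⟨ι, hι, U, hcov, hdiam, hsum⟩
  refine ⟨ι, hι, U, hcov, hdiam, le_trans (ENNReal.tsum_le_tsum fun i => ?_) hsum⟩
  exact ENNReal.rpow_le_rpow_of_exponent_ge
    ((hdiam i).2.trans (ENNReal.ofReal_le_one.mpr hhi)) hs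

theorem ICov.union {ε' : ℝ} (hε : 0 ≤ ε) (hε' : 0 ≤ ε') :
    ICov F s lo hi ε → ICov G s lo hi ε' → ICov (F ∪ G) s lo hi (ε + ε') := by
  rintro ⟨ι, hι, U, hcov, hdiam, hsum⟩ ⟨κ, hκ, V, hcov', hdiam', hsum'⟩
  refine ⟨ι ⊕ κ, inferInstance, Sum.elim U V, ?_, Sum.forall.mpr ⟨hdiam, hdiam'⟩, ?_⟩
  · rw [iUnion_sumElim]
    exact union_subset_union hcov hcov'
  · rw [ENNReal.summable.tsum_sum ENNReal.summable, ENNReal.ofReal_add hε hε']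
    exact add_le_add hsum hsum'

theorem ICov_of_finset {ι : Type} (t : Finset ι) (U : ι → Set X) {ℓ : ℝ} (hℓ : 0 < ℓ)
    (hlo : lo ≤ ℓ) (hhi : ℓ ≤ hi) (hcov : F ⊆ ⋃ i ∈ t, U i)
    (hdiam : ∀ i ∈ t, EMetric.diam (U i) = ENNReal.ofReal ℓ) (hsum : t.card * ℓ ^ s ≤ ε) :
    ICov F s lo hi ε := by
  refine ⟨t, inferInstance, fun i => U i, fun x hx => ?_, fun i => ?_, ?_⟩
  · obtain ⟨i, hi, hx⟩ := mem_iUnion₂.mp (hcov hx)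
    exact mem_iUnion.mpr ⟨⟨i, hi⟩, hx⟩
  · rw [hdiam i i.2]
    exact ⟨ENNReal.ofReal_le_ofReal hlo, ENNReal.ofReal_le_ofReal hhi⟩
  · calc ∑' i : t, EMetric.diam (U i) ^ s = ∑ i ∈ t, ENNReal.ofReal (ℓ ^ s) := by
          rw [Finset.tsum_subtype t (fun i => EMetric.diam (U i) ^ s)]
          exact Finset.sum_congr rfl fun i hi => by rw [hdiam i hi, ENNReal.ofReal_rpow_of_pos hℓ]
      _ = ENNReal.ofReal (t.card * ℓ ^ s) := by
          rw [Finset.sum_const, nsmul_eq_mul, ENNReal.ofReal_mul (by positivity),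
            ENNReal.ofReal_natCast]
      _ ≤ ENNReal.ofReal ε := ENNReal.ofReal_le_ofReal hsum

theorem exists_eq_ofReal_of_le_of_le {e : ℝ≥0∞} (hlo : 0 < lo) (h₁ : ENNReal.ofReal lo ≤ e)
    (h₂ : e ≤ ENNReal.ofReal hi) : ∃ d, lo ≤ d ∧ d ≤ hi ∧ e = ENNReal.ofReal d := by
  have he : e = ENNReal.ofReal e.toReal :=
    (ENNReal.ofReal_toReal (ne_top_of_le_ne_top ENNReal.ofReal_ne_top h₂)).symm
  rw [he, ENNReal.ofReal_le_ofReal_iff'] at h₁ h₂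
  have hlod := h₁.resolve_right hlo.not_ge
  exact ⟨e.toReal, hlod, h₂.resolve_right (hlo.trans_le hlod).not_ge, he⟩

open scoped Classical in
/-- Discrete mass distribution principle: put mass `1 / #P` on each of the points `f i`, `i ∈ P`. -/
theorem one_le_mul_of_ICov {ι : Type*} (f : ι → X) (P : Finset ι) (hPF : ∀ i ∈ P, f i ∈ F)
    (hP : P.Nonempty) {c : ℝ} (hc : 0 ≤ c) (hlo : 0 < lo)
    (hcount : ∀ (U : Set X) (d : ℝ), lo ≤ d → d ≤ hi → EMetric.diam U = ENNReal.ofReal d →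
      ((P.filter fun i => f i ∈ U).card : ℝ) ≤ c * d ^ s * P.card)
    (h : ICov F s lo hi ε) : 1 ≤ c * ε := by
  obtain ⟨κ, _, U, hcov, hdiam, hsum⟩ := h
  have hcount' : ∀ j, ((P.filter fun i => f i ∈ U j).card : ℝ≥0∞) ≤
      ENNReal.ofReal (c * P.card) * EMetric.diam (U j) ^ s := by
    intro j
    obtain ⟨d, hlod, hdhi, hd⟩ := exists_eq_ofReal_of_le_of_le hlo (hdiam j).1 (hdiam j).2
    rw [hd, ENNReal.ofReal_rpow_of_pos (hlo.trans_le hlod),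
      ← ENNReal.ofReal_mul (mul_nonneg hc P.card.cast_nonneg), ← ENNReal.ofReal_natCast]
    exact ENNReal.ofReal_le_ofReal (by linarith [hcount (U j) d hlod hdhi hd])
  have hmass : (P.card : ℝ≥0∞) ≤ ENNReal.ofReal (c * P.card * ε) :=
    calc (P.card : ℝ≥0∞) = ∑ i ∈ P, 1 := by rw [Finset.sum_const, nsmul_one]
      _ ≤ ∑ i ∈ P, ∑' j, if f i ∈ U j then 1 else 0 := Finset.sum_le_sum fun i hi => by
          obtain ⟨j, hj⟩ := mem_iUnion.mp (hcov (hPF i hi))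
          exact (if_pos hj).symm.le.trans (ENNReal.le_tsum j)
      _ = ∑' j, ((P.filter fun i => f i ∈ U j).card : ℝ≥0∞) := by
          rw [← Summable.tsum_finsetSum fun _ _ => ENNReal.summable]
          simp_rw [Finset.sum_boole]
      _ ≤ ∑' j, ENNReal.ofReal (c * P.card) * EMetric.diam (U j) ^ s :=
          ENNReal.tsum_le_tsum hcount'
      _ ≤ ENNReal.ofReal (c * P.card) * ENNReal.ofReal ε := by
          rw [ENNReal.tsum_mul_left]
          gcongr
      _ = ENNReal.ofReal (c * P.card * ε) := (ENNReal.ofReal_mul (by positivity)).symm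
  have hPpos : (0 : ℝ) < P.card := by exact_mod_cast hP.card_pos
  rw [← ENNReal.ofReal_natCast, ENNReal.ofReal_le_ofReal_iff'] at hmass
  have := hmass.resolve_right hPpos.not_ge
  nlinarith

end Covers

section Dimensions

variable {X : Type} [PseudoEMetricSpace X] {F : Set X}

theorem eventually_nhdsGT_zero_iff {P : ℝ → Prop} :
    (∀ᶠ δ in 𝓝[>] 0, P δ) ↔ ∃ δ₀ > 0, ∀ δ : ℝ, 0 < δ → δ ≤ δ₀ → P δ := by
  simp only [(nhdsGT_basis_Ioc (0:ℝ)).eventually_iff, mem_Ioc, and_imp, gt_iff_lt]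

theorem frequently_nhdsGT_zero_iff {P : ℝ → Prop} :
    (∃ᶠ δ in 𝓝[>] 0, P δ) ↔ ∀ δ₀ > 0, ∃ δ : ℝ, 0 < δ ∧ δ ≤ δ₀ ∧ P δ := by
  simp only [(nhdsGT_basis_Ioc (0:ℝ)).frequently_iff, mem_Ioc, and_assoc, gt_iff_lt]

theorem eventually_le_one_nhdsGT_zero : ∀ᶠ δ in 𝓝[>] (0 : ℝ), δ ≤ 1 :=
  eventually_nhdsGT_zero_iff.mpr ⟨1, one_pos, fun _ _ h => h⟩

theorem tendsto_rpow_nhdsGT_zero {p : ℝ} (hp : 0 < p) :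
    Tendsto (fun δ : ℝ => δ ^ p) (𝓝[>] 0) (𝓝 0) :=
  (tendsto_id.mono_left nhdsWithin_le_nhds).rpow_const_nhds_zero hp

theorem EqCov_iff_ICov {s δ ε : ℝ} : EqCov F s δ ε ↔ ICov F s δ δ ε := by
  simp only [EqCov, ICov, le_antisymm_iff, and_comm]

theorem lowerBoxDim_eq_lowerIDim_one : lowerBoxDim F = lowerIDim F 1 := by
  simp only [lowerBoxDim, lowerIDim, one_ne_zero, if_false, div_one, Real.rpow_one,
    EqCov_iff_ICov]

theorem upperBoxDim_eq_upperIDim_one : upperBoxDim F = upperIDim F 1 := by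
  simp only [upperBoxDim, upperIDim, one_ne_zero, if_false, div_one, Real.rpow_one,
    EqCov_iff_ICov]

theorem csInf_eq_of_forall_gt_mem {S : Set ℝ} {d : ℝ} (hgt : ∀ s > d, s ∈ S)
    (hle : ∀ s ∈ S, d ≤ s) : sInf S = d :=
  csInf_eq_of_forall_ge_of_forall_gt_exists_lt ⟨d + 1, hgt _ (lt_add_one d)⟩ hle fun _ hw =>
    let ⟨s, hds, hsw⟩ := exists_between hw
    ⟨s, hgt s hds, hsw⟩

theorem lowerIDim_eq_and_upperIDim_eq {θ c d : ℝ} (hθ : θ ≠ 0) (hcd : c < d) (hd : 0 ≤ d)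
    (hup : ∀ s > d, ∀ ε > 0, ∀ᶠ δ in 𝓝[>] 0, ICov F s (δ ^ (1 / θ)) δ ε)
    (hlow : ∀ s ∈ Ioo c d, ∃ ε > 0, ∀ᶠ δ in 𝓝[>] 0, ¬ ICov F s (δ ^ (1 / θ)) δ ε) :
    lowerIDim F θ = d ∧ upperIDim F θ = d := by
  simp only [lowerIDim, upperIDim, if_neg hθ, ← eventually_nhdsGT_zero_iff,
    ← frequently_nhdsGT_zero_iff]
  have hle : ∀ s, (∀ ε > 0, ∃ᶠ δ in 𝓝[>] 0, ICov F s (δ ^ (1 / θ)) δ ε) → d ≤ s := by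
    intro s hs
    by_contra! hsd
    obtain ⟨ε, hε, hnot⟩ :=
      hlow (max s ((c + d) / 2)) ⟨lt_max_of_lt_right (by linarith), max_lt hsd (by linarith)⟩
    obtain ⟨δ, hcov, hncov, hδ⟩ :=
      ((hs ε hε).and_eventually (hnot.and eventually_le_one_nhdsGT_zero)).exists
    exact hncov (hcov.mono_exponent (le_max_left _ _) hδ)
  have hmem : ∀ s > d, 0 ≤ s ∧ ∀ ε > 0, ∀ᶠ δ in 𝓝[>] 0, ICov F s (δ ^ (1 / θ)) δ ε :=
    fun s hs => ⟨hd.trans hs.le, hup s hs⟩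
  exact ⟨csInf_eq_of_forall_gt_mem
      (fun s hs => ⟨(hmem s hs).1, fun ε hε => ((hmem s hs).2 ε hε).frequently⟩)
      (fun s hs => hle s hs.2),
    csInf_eq_of_forall_gt_mem hmem fun s hs => hle s fun ε hε => (hs.2 ε hε).frequently⟩

end Dimensions

section Plane

def planeProd (A B : Set ℝ) : Set (EuclideanSpace ℝ (Fin 2)) :=
  {z | z 0 ∈ A ∧ z 1 ∈ B}

theorem dist_eq_sqrt_fin_two (z w : EuclideanSpace ℝ (Fin 2)) :
    dist z w = √((z 0 - w 0) ^ 2 + (z 1 - w 1) ^ 2) := by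
  simp [EuclideanSpace.dist_eq, Fin.sum_univ_two, Real.dist_eq, sq_abs]

theorem ediam_planeProd_Icc (a b : ℝ) {l : ℝ} (hl : 0 ≤ l) :
    EMetric.diam (planeProd (Icc a (a + l)) (Icc b (b + l))) = ENNReal.ofReal (l * √2) := by
  have hdiag : √(l ^ 2 + l ^ 2) = l * √2 := by
    rw [← two_mul, Real.sqrt_mul' _ (sq_nonneg l), Real.sqrt_sq hl, mul_comm]
  refine le_antisymm (EMetric.diam_le fun z hz w hw => ?_) ?_
  · rw [edist_dist, dist_eq_sqrt_fin_two, ← hdiag]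
    obtain ⟨⟨hz0, hz0'⟩, hz1, hz1'⟩ := hz
    obtain ⟨⟨hw0, hw0'⟩, hw1, hw1'⟩ := hw
    refine ENNReal.ofReal_le_ofReal (Real.sqrt_le_sqrt (add_le_add ?_ ?_)) <;>
      exact sq_le_sq' (by linarith) (by linarith)
  · have hlo : !₂[a, b] ∈ planeProd (Icc a (a + l)) (Icc b (b + l)) := by
      simp [planeProd, hl]
    have hhi : !₂[a + l, b + l] ∈ planeProd (Icc a (a + l)) (Icc b (b + l)) := by
      simp [planeProd, hl]
    refine le_trans (le_of_eq ?_) (EMetric.edist_le_diam_of_mem hhi hlo)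
    rw [edist_dist, dist_eq_sqrt_fin_two, ← hdiag]
    simp

theorem planeProd_subset_biUnion {A B : Set ℝ} {tA tB : Finset ℝ} {l : ℝ}
    (hA : A ⊆ ⋃ a ∈ tA, Icc a (a + l)) (hB : B ⊆ ⋃ b ∈ tB, Icc b (b + l)) :
    planeProd A B ⊆ ⋃ p ∈ tA ×ˢ tB, planeProd (Icc p.1 (p.1 + l)) (Icc p.2 (p.2 + l)) := by
  rintro z ⟨hzA, hzB⟩
  obtain ⟨a, ha, hza⟩ := mem_iUnion₂.mp (hA hzA)
  obtain ⟨b, hb, hzb⟩ := mem_iUnion₂.mp (hB hzB)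
  exact mem_iUnion₂.mpr ⟨(a, b), Finset.mem_product.mpr ⟨ha, hb⟩, hza, hzb⟩

theorem ICov_planeProd {A B : Set ℝ} {tA tB : Finset ℝ} {s lo hi ε ℓ : ℝ} (hℓ : 0 < ℓ)
    (hlo : lo ≤ ℓ) (hhi : ℓ ≤ hi) (hA : A ⊆ ⋃ a ∈ tA, Icc a (a + ℓ / √2))
    (hB : B ⊆ ⋃ b ∈ tB, Icc b (b + ℓ / √2)) (hsum : tA.card * tB.card * ℓ ^ s ≤ ε) :
    ICov (planeProd A B) s lo hi ε := by
  refine ICov_of_finset (tA ×ˢ tB) _ hℓ hlo hhi (planeProd_subset_biUnion hA hB)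
    (fun p _ => ?_) (by rwa [Finset.card_product, Nat.cast_mul])
  rw [ediam_planeProd_Icc _ _ (by positivity), div_mul_cancel₀ _ (by positivity)]

theorem subset_biUnion_Icc_self (t : Finset ℝ) {l : ℝ} (hl : 0 ≤ l) :
    (t : Set ℝ) ⊆ ⋃ a ∈ t, Icc a (a + l) :=
  fun _ ha => mem_biUnion ha ⟨le_rfl, le_add_of_nonneg_right hl⟩

theorem exists_Icc_cover {w l : ℝ} (hl : 0 < l) (hlw : l ≤ w) :
    ∃ t : Finset ℝ, (t.card : ℝ) ≤ 2 * w / l ∧ Icc 0 w ⊆ ⋃ a ∈ t, Icc a (a + l) := by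
  refine ⟨(Finset.range (⌊w / l⌋₊ + 1)).image fun j : ℕ => j * l, ?_, ?_⟩
  · have hwl : 1 ≤ w / l := (one_le_div hl).mpr hlw
    calc (((Finset.range (⌊w / l⌋₊ + 1)).image fun j : ℕ => j * l).card : ℝ)
        ≤ ⌊w / l⌋₊ + 1 := by exact_mod_cast Finset.card_image_le.trans (Finset.card_range _).le
      _ ≤ w / l + w / l := by gcongr; exact Nat.floor_le (by positivity)
      _ = 2 * w / l := by ring
  · rintro y ⟨hy0, hyw⟩
    have hyl : 0 ≤ y / l := by positivity
    refine mem_iUnion₂.mpr ⟨⌊y / l⌋₊ * l, Finset.mem_image_of_mem _ ?_, ?_, ?_⟩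
    · exact Finset.mem_range_succ_iff.mpr (Nat.floor_le_floor (by gcongr))
    · calc (⌊y / l⌋₊ : ℝ) * l ≤ y / l * l := by gcongr; exact Nat.floor_le hyl
        _ = y := div_mul_cancel₀ y hl.ne'
    · calc y = y / l * l := (div_mul_cancel₀ y hl.ne').symm
        _ ≤ ⌊y / l⌋₊ * l + l := by nlinarith [Nat.lt_floor_add_one (y / l)]

theorem ICov_planeProd_finset_Icc (C : Finset ℝ) {w ℓ s lo hi : ℝ} (hℓ : 0 < ℓ) (hlo : lo ≤ ℓ)
    (hhi : ℓ ≤ hi) (hw : ℓ / √2 ≤ w) :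
    ICov (planeProd C (Icc 0 w)) s lo hi (2 * √2 * C.card * w * ℓ ^ (s - 1)) := by
  obtain ⟨t, hcard, hcov⟩ := exists_Icc_cover (by positivity) hw
  refine ICov_planeProd hℓ hlo hhi (subset_biUnion_Icc_self C (by positivity)) hcov ?_
  calc C.card * t.card * ℓ ^ s ≤ C.card * (2 * w / (ℓ / √2)) * ℓ ^ s := by gcongr
    _ = 2 * √2 * C.card * w * ℓ ^ (s - 1) := by rw [Real.rpow_sub_one hℓ.ne']; field_simp

theorem ICov_planeProd_Icc_Icc {w₁ w₂ ℓ s lo hi : ℝ} (hℓ : 0 < ℓ) (hlo : lo ≤ ℓ) (hhi : ℓ ≤ hi)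
    (hw₁ : ℓ / √2 ≤ w₁) (hw₂ : ℓ / √2 ≤ w₂) :
    ICov (planeProd (Icc 0 w₁) (Icc 0 w₂)) s lo hi (8 * w₁ * w₂ * ℓ ^ (s - 2)) := by
  obtain ⟨t₁, hcard₁, hcov₁⟩ := exists_Icc_cover (by positivity) hw₁
  obtain ⟨t₂, hcard₂, hcov₂⟩ := exists_Icc_cover (by positivity) hw₂
  have hw₁0 : 0 ≤ w₁ := le_trans (by positivity) hw₁
  refine ICov_planeProd hℓ hlo hhi hcov₁ hcov₂ ?_
  calc t₁.card * t₂.card * ℓ ^ s ≤ 2 * w₁ / (ℓ / √2) * (2 * w₂ / (ℓ / √2)) * ℓ ^ s := by gcongr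
    _ = 4 * (√2 * √2) * w₁ * w₂ * (ℓ ^ s / ℓ ^ (2 : ℝ)) := by rw [Real.rpow_two]; field_simp; ring
    _ = 8 * w₁ * w₂ * ℓ ^ (s - 2) := by
        rw [Real.mul_self_sqrt zero_le_two, ← Real.rpow_sub hℓ]; ring

theorem card_le_of_pairwise_le_abs_sub {S : Finset ℝ} {a b r : ℝ} (hr : 0 < r) (hab : a ≤ b)
    (hS : ↑S ⊆ Icc a b) (hsep : (S : Set ℝ).Pairwise fun x y => r ≤ |x - y|) :
    (S.card : ℝ) ≤ (b - a) / r + 1 := by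
  induction S using Finset.induction_on_max generalizing b with
  | empty => simp only [Finset.card_empty, Nat.cast_zero]; positivity
  | insert m S hlt ih =>
    have hm : m ∉ S := fun h => lt_irrefl m (hlt m h)
    rw [Finset.card_insert_of_notMem hm, Nat.cast_add, Nat.cast_one, add_le_add_iff_right]
    have hmb : m ≤ b := (hS (Finset.mem_insert_self m S)).2
    rcases S.eq_empty_or_nonempty with rfl | ⟨x, hx⟩
    · simp only [Finset.card_empty, Nat.cast_zero]; exact div_nonneg (by linarith) hr.le
    have hbelow : ∀ y ∈ S, y ≤ m - r := fun y hy => by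
      have : r ≤ |y - m| :=
        hsep (Finset.mem_insert_of_mem hy) (Finset.mem_insert_self m S) (hlt y hy).ne
      rw [abs_sub_comm, abs_of_pos (sub_pos.mpr (hlt y hy))] at this
      linarith
    have hax : a ≤ x := (hS (Finset.mem_insert_of_mem hx)).1
    calc (S.card : ℝ) ≤ (m - r - a) / r + 1 :=
          ih (hax.trans (hbelow x hx))
            (fun y hy => ⟨(hS (Finset.mem_insert_of_mem hy)).1, hbelow y hy⟩)
            (hsep.mono (by simp))
      _ = (m - a) / r := by field_simp; ring
      _ ≤ (b - a) / r := by gcongr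

open scoped Classical in
theorem card_filter_mem_product_le {X Y : Finset ℝ} {rx ry d : ℝ} (hrx : 0 < rx) (hry : 0 < ry)
    (hd : 0 ≤ d) (hX : (X : Set ℝ).Pairwise fun x y => rx ≤ |x - y|)
    (hY : (Y : Set ℝ).Pairwise fun x y => ry ≤ |x - y|) {U : Set (EuclideanSpace ℝ (Fin 2))}
    (hU : ∀ z ∈ U, ∀ w ∈ U, dist z w ≤ d) :
    (((X ×ˢ Y).filter fun p => !₂[p.1, p.2] ∈ U).card : ℝ) ≤
      (2 * d / rx + 1) * (2 * d / ry + 1) := by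
  rcases U.eq_empty_or_nonempty with rfl | ⟨z, hz⟩
  · simp only [mem_empty_iff_false, Finset.filter_false, Finset.card_empty, Nat.cast_zero]
    positivity
  have hcoord : ∀ {S : Finset ℝ} {r : ℝ}, 0 < r → (S : Set ℝ).Pairwise (fun x y => r ≤ |x - y|) →
      ∀ i, ((S.filter fun x => |x - z i| ≤ d).card : ℝ) ≤ 2 * d / r + 1 := by
    intro S r hr hS i
    convert card_le_of_pairwise_le_abs_sub hr (by linarith : z i - d ≤ z i + d) (fun x hx => ?_)
      (hS.mono (Finset.coe_subset.mpr (Finset.filter_subset _ _))) using 2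
    · ring
    · have := (Finset.mem_filter.mp hx).2
      rw [abs_le] at this
      constructor <;> linarith
  calc (((X ×ˢ Y).filter fun p => !₂[p.1, p.2] ∈ U).card : ℝ)
      ≤ ((X.filter fun x => |x - z 0| ≤ d) ×ˢ (Y.filter fun y => |y - z 1| ≤ d)).card := by
        refine Nat.cast_le.mpr (Finset.card_le_card fun p hp => ?_)
        obtain ⟨hpXY, hpU⟩ := Finset.mem_filter.mp hp
        obtain ⟨hpX, hpY⟩ := Finset.mem_product.mp hpXY
        have hdist := hU _ hpU z hz
        refine Finset.mem_product.mpr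
          ⟨Finset.mem_filter.mpr ⟨hpX, ?_⟩, Finset.mem_filter.mpr ⟨hpY, ?_⟩⟩
        · simpa [Real.dist_eq] using (PiLp.dist_apply_le _ _ 0).trans hdist
        · simpa [Real.dist_eq] using (PiLp.dist_apply_le _ _ 1).trans hdist
    _ ≤ (2 * d / rx + 1) * (2 * d / ry + 1) := by
        rw [Finset.card_product, Nat.cast_mul]
        exact mul_le_mul (hcoord hrx hX 0) (hcoord hry hY 1) (Nat.cast_nonneg _) (by positivity)

end Plane

section Sets

theorem countable_F1 : F1.Countable :=
  ((countable_range fun k : ℕ => 1 / (k : ℝ)).mono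
    (by rintro _ ⟨k, -, rfl⟩; exact ⟨k, rfl⟩)).insert 0

theorem countable_Flog : Flog.Countable :=
  ((countable_range fun k : ℕ => 1 / Real.log k).mono
    (by rintro _ ⟨k, -, rfl⟩; exact ⟨k, rfl⟩)).insert 0

theorem countable_planeProd {A B : Set ℝ} (hA : A.Countable) (hB : B.Countable) :
    (planeProd A B).Countable := by
  refine ((hA.prod hB).image fun p => !₂[p.1, p.2]).mono fun z hz => ?_
  exact ⟨(z 0, z 1), hz, by ext i; fin_cases i <;> simp⟩

theorem exists_finset_F1_subset {u : ℝ} (hu : 0 < u) :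
    ∃ C : Finset ℝ, (C.card : ℝ) ≤ u⁻¹ ∧ F1 ⊆ ↑C ∪ Icc 0 u := by
  refine ⟨(Finset.Icc 1 ⌊u⁻¹⌋₊).image fun k : ℕ => 1 / (k : ℝ), ?_, ?_⟩
  · refine (Nat.cast_le.mpr Finset.card_image_le).trans ?_
    rw [Nat.card_Icc, Nat.add_sub_cancel]
    exact Nat.floor_le (by positivity)
  rintro x (rfl | ⟨k, hk, rfl⟩)
  · exact Or.inr ⟨le_rfl, hu.le⟩
  by_cases hkN : k ≤ ⌊u⁻¹⌋₊
  · exact Or.inl (Finset.mem_coe.mpr (Finset.mem_image_of_mem _ (Finset.mem_Icc.mpr ⟨hk, hkN⟩)))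
  · have : u⁻¹ < k := (Nat.floor_lt (by positivity)).mp (not_le.mp hkN)
    exact Or.inr ⟨by positivity, by rw [one_div]; exact inv_le_of_inv_le₀ hu this.le⟩

theorem Flog_subset_Icc : Flog ⊆ Icc 0 2 := by
  rintro x (rfl | ⟨k, hk, rfl⟩)
  · exact ⟨le_rfl, zero_le_two⟩
  have hlog : 1 / 2 ≤ Real.log k := by
    have := Real.log_two_gt_d9
    have := Real.log_le_log two_pos (by exact_mod_cast hk : (2 : ℝ) ≤ k)
    linarith
  exact ⟨by positivity, by rw [div_le_iff₀ (by linarith)]; linarith⟩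

theorem exists_mem_F1_near {t r : ℝ} (ht : 0 < t) (htr : t ^ 2 ≤ r) :
    ∃ p ∈ F1, t - r ≤ p ∧ p ≤ t := by
  set k := ⌈t⁻¹⌉₊
  have hk : t⁻¹ ≤ k := Nat.le_ceil _
  have hk' : (k : ℝ) < t⁻¹ + 1 := Nat.ceil_lt_add_one (by positivity)
  have hkpos : (0 : ℝ) < k := (inv_pos.mpr ht).trans_le hk
  have htinv : t * t⁻¹ = 1 := mul_inv_cancel₀ ht.ne'
  refine ⟨1 / k, Or.inr ⟨k, Nat.one_le_ceil_iff.mpr (inv_pos.mpr ht), rfl⟩, ?_, ?_⟩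
  · rw [le_div_iff₀ hkpos]; nlinarith
  · rw [div_le_iff₀ hkpos]; nlinarith

theorem exists_mem_Flog_near {t r : ℝ} (ht0 : 0 < t) (ht1 : t ≤ 1) (hr : Real.exp (-t⁻¹) ≤ r) :
    ∃ p ∈ Flog, t - r ≤ p ∧ p ≤ t := by
  set m := ⌈Real.exp t⁻¹⌉₊
  have hm : Real.exp t⁻¹ ≤ m := Nat.le_ceil _
  have hm2 : 2 ≤ m := Nat.lt_ceil.mpr (by exact_mod_cast Real.one_lt_exp_iff.mpr (inv_pos.mpr ht0))
  have hlog_ge : t⁻¹ ≤ Real.log m := by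
    rw [← Real.log_exp t⁻¹]; exact Real.log_le_log (Real.exp_pos _) hm
  have hlog_pos : 0 < Real.log m := (inv_pos.mpr ht0).trans_le hlog_ge
  have hlog_le : Real.log m ≤ t⁻¹ + r := by
    rw [Real.log_le_iff_le_exp (by positivity)]
    calc (m : ℝ) ≤ Real.exp t⁻¹ + 1 := (Nat.ceil_lt_add_one (Real.exp_pos _).le).le
      _ = Real.exp t⁻¹ * (Real.exp (-t⁻¹) + 1) := by rw [mul_add, ← Real.exp_add]; simp [add_comm]
      _ ≤ Real.exp t⁻¹ * Real.exp r := by gcongr; linarith [Real.add_one_le_exp r]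
      _ = Real.exp (t⁻¹ + r) := (Real.exp_add _ _).symm
  have hr0 : 0 ≤ r := (Real.exp_pos _).le.trans hr
  have htinv : t * t⁻¹ = 1 := mul_inv_cancel₀ ht0.ne'
  have htt : t ≤ t⁻¹ := by rw [le_inv_comm₀ ht0 ht0]; nlinarith
  refine ⟨1 / Real.log m, Or.inr ⟨m, hm2, rfl⟩, ?_, ?_⟩
  · rw [le_div_iff₀ hlog_pos]
    nlinarith
  · rw [div_le_iff₀ hlog_pos]; nlinarith

/-- One point of `A` in each of the intervals `[t - r, t]`, `t = 2r, 4r, 6r, … ≤ T`. -/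
theorem exists_separated_finset_of_forall_near {A : Set ℝ} {r T : ℝ} (hr : 0 < r)
    (hA : ∀ t ∈ Ioc 0 T, ∃ p ∈ A, t - r ≤ p ∧ p ≤ t) :
    ∃ Y : Finset ℝ, ↑Y ⊆ A ∧ (Y : Set ℝ).Pairwise (fun x y => r ≤ |x - y|) ∧
      T / (2 * r) - 1 ≤ Y.card := by
  set J := ⌊T / (2 * r)⌋₊
  have ht : ∀ j : Fin J, 2 * r * ((j : ℕ) + 1) ∈ Ioc 0 T := fun j => by
    refine ⟨by positivity, ?_⟩
    have := (Nat.le_floor_iff' (Nat.succ_ne_zero j)).mp j.isLt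
    push_cast at this
    rwa [le_div_iff₀ (by positivity), mul_comm] at this
  choose p hpA hp using fun j : Fin J => hA _ (ht j)
  have hstep : ∀ i j : Fin J, i < j → p i + r ≤ p j := fun i j hij => by
    have : ((i : ℕ) : ℝ) + 1 ≤ (j : ℕ) := by exact_mod_cast hij
    nlinarith [(hp i).2, (hp j).1]
  have hmono : StrictMono p := fun i j hij => by linarith [hstep i j hij]
  refine ⟨Finset.univ.image p, ?_, ?_, ?_⟩
  · intro x hx
    obtain ⟨j, -, rfl⟩ := Finset.mem_image.mp hx
    exact hpA j
  · intro x hx y hy hxy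
    obtain ⟨i, -, rfl⟩ := Finset.mem_image.mp hx
    obtain ⟨j, -, rfl⟩ := Finset.mem_image.mp hy
    rcases lt_or_gt_of_ne (fun h => hxy (congrArg p h)) with h | h
    · rw [abs_sub_comm, abs_of_nonneg] <;> linarith [hstep i j h]
    · rw [abs_of_nonneg] <;> linarith [hstep j i h]
  · rw [Finset.card_image_of_injective _ hmono.injective, Finset.card_univ, Fintype.card_fin]
    exact (Nat.sub_one_lt_floor _).le

end Sets

section UpperBound

theorem ICov_Fprod {θ s δ : ℝ} (hθ0 : 0 < θ) (hθ1 : θ ≤ 1) (hs : 1 + θ / (1 + θ) ≤ s)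
    (hδ0 : 0 < δ) (hδ1 : δ ≤ 1) :
    ICov Fprod s (δ ^ (1 / θ)) δ (24 * δ ^ (s - (1 + θ / (1 + θ)))) := by
  set η := s - (1 + θ / (1 + θ)) with hη_def
  have hη : 0 ≤ η := sub_nonneg.mpr hs
  set u := δ ^ (1 / (1 + θ))
  set ρ := δ ^ (1 / θ)
  have hu : 0 < u := by positivity
  have hρ : 0 < ρ := by positivity
  have hδu : δ ≤ u :=
    Real.self_le_rpow_of_le_one hδ0.le hδ1 (by rw [div_le_one (by linarith)]; linarith)
  have hρδ : ρ ≤ δ := Real.rpow_le_self_of_le_one hδ0.le hδ1 (one_le_one_div hθ0 hθ1)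
  have hsqrt : √2 ≤ 2 := by rw [Real.sqrt_le_left zero_le_two]; norm_num
  have hdiv : ∀ x, 0 < x → x / √2 ≤ x := fun x hx => div_le_self hx.le (by simp)
  obtain ⟨C, hC, hF1⟩ := exists_finset_F1_subset hu
  have hcolumns : ICov (planeProd C (Icc 0 2)) s ρ δ (8 * δ ^ η) := by
    refine (ICov_planeProd_finset_Icc C hρ le_rfl hρδ (by linarith [hdiv ρ hρ])).mono
      subset_rfl ?_
    have hexp : u⁻¹ * ρ ^ (s - 1) = δ ^ (η / θ) := by
      rw [← Real.rpow_neg hδ0.le, ← Real.rpow_mul hδ0.le, ← Real.rpow_add hδ0]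
      congr 1; rw [hη_def]; field_simp; ring
    calc 2 * √2 * C.card * 2 * ρ ^ (s - 1) = 4 * √2 * (C.card * ρ ^ (s - 1)) := by ring
      _ ≤ 4 * √2 * (u⁻¹ * ρ ^ (s - 1)) := by gcongr
      _ ≤ 4 * 2 * δ ^ η := by
          rw [hexp]
          exact mul_le_mul (by linarith) (Real.rpow_le_rpow_of_exponent_ge hδ0 hδ1
            (le_div_self hη hθ0 hθ1)) (by positivity) (by positivity)
      _ = 8 * δ ^ η := by norm_num
  have hstrip : ICov (planeProd (Icc 0 u) (Icc 0 2)) s ρ δ (16 * δ ^ η) := by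
    refine (ICov_planeProd_Icc_Icc hδ0 hρδ le_rfl (by linarith [hdiv δ hδ0])
      (by linarith [hdiv δ hδ0])).mono subset_rfl (le_of_eq ?_)
    rw [show 8 * u * 2 * δ ^ (s - 2) = 16 * (u * δ ^ (s - 2)) by ring, ← Real.rpow_add hδ0]
    congr 2; rw [hη_def]; field_simp; ring
  refine (hcolumns.union (by positivity) (by positivity) hstrip).mono ?_ (by linarith)
  rintro z ⟨hz0, hz1⟩
  exact (hF1 hz0).imp (fun h => ⟨h, Flog_subset_Icc hz1⟩) (fun h => ⟨h, Flog_subset_Icc hz1⟩)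

theorem eventually_ICov_Fprod {θ s ε : ℝ} (hθ0 : 0 < θ) (hθ1 : θ ≤ 1)
    (hs : 1 + θ / (1 + θ) < s) (hε : 0 < ε) :
    ∀ᶠ δ in 𝓝[>] 0, ICov Fprod s (δ ^ (1 / θ)) δ ε := by
  filter_upwards [self_mem_nhdsWithin, eventually_le_one_nhdsGT_zero,
    (tendsto_rpow_nhdsGT_zero (sub_pos.mpr hs)).eventually_le_const
      (by positivity : (0 : ℝ) < ε / 24)] with δ (hδ0 : 0 < δ) hδ1 hδε
  exact (ICov_Fprod hθ0 hθ1 hs.le hδ0 hδ1).mono subset_rfl (by linarith)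

end UpperBound

section LowerBound

theorem count_bound_of_rpow_le {d u ρ s μ : ℝ} (hu : 0 < u) (hρ : 0 < ρ) (hρd : ρ ≤ d)
    (h2 : d ^ (2 - s) ≤ u * μ) (h1 : u * d ^ (1 - s) ≤ μ) :
    (2 * d / (u / 4) ^ 2 + 1) * (2 * d / ρ + 1) ≤ 99 * d ^ s * (u⁻¹ * (μ / ρ)) := by
  have hd : 0 < d := hρ.trans_le hρd
  have hds : 0 < d ^ s := by positivity
  have hsq : d ^ 2 ≤ d ^ s * (u * μ) := by
    calc d ^ 2 = d ^ s * d ^ (2 - s) := by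
          rw [← Real.rpow_add hd, add_sub_cancel, Real.rpow_two]
      _ ≤ d ^ s * (u * μ) := by gcongr
  have hlin : u * d ≤ d ^ s * μ := by
    calc u * d = d ^ s * (u * d ^ (1 - s)) := by
          rw [mul_left_comm, ← Real.rpow_add hd, add_sub_cancel, Real.rpow_one]
      _ ≤ d ^ s * μ := by gcongr
  calc (2 * d / (u / 4) ^ 2 + 1) * (2 * d / ρ + 1)
      ≤ (32 * d / u ^ 2 + 1) * (3 * d / ρ) := by
        have hρ' : 2 * d / ρ + 1 ≤ 3 * d / ρ := by
          rw [div_add_one hρ.ne', div_le_div_iff_of_pos_right hρ]; linarith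
        rw [show 2 * d / (u / 4) ^ 2 = 32 * d / u ^ 2 by field_simp; norm_num]
        gcongr
    _ = (96 * d ^ 2 / u + 3 * (u * d)) / (u * ρ) := by field_simp; ring
    _ ≤ (96 * (d ^ s * (u * μ)) / u + 3 * (d ^ s * μ)) / (u * ρ) := by gcongr
    _ = 99 * d ^ s * (u⁻¹ * (μ / ρ)) := by field_simp; ring

theorem exists_F1_separated {u : ℝ} (hu0 : 0 < u) (hu1 : u ≤ 1) :
    ∃ X : Finset ℝ, ↑X ⊆ F1 ∧ (X : Set ℝ).Pairwise (fun x y => (u / 4) ^ 2 ≤ |x - y|) ∧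
      u⁻¹ ≤ X.card := by
  obtain ⟨X, hXF, hXsep, hXcard⟩ := exists_separated_finset_of_forall_near (A := F1)
    (T := u / 4) (by positivity) fun t ht =>
      exists_mem_F1_near ht.1 (pow_le_pow_left₀ ht.1.le ht.2 2)
  refine ⟨X, hXF, hXsep, le_trans ?_ hXcard⟩
  have : 1 ≤ u⁻¹ := one_le_inv₀ hu0 |>.mpr hu1
  calc u⁻¹ ≤ 2 * u⁻¹ - 1 := by linarith
    _ = u / 4 / (2 * (u / 4) ^ 2) - 1 := by field_simp; ring

theorem exists_Flog_separated {ρ μ : ℝ} (hρ : 0 < ρ) (hρμ : ρ ≤ μ) (hμ : 4 * μ ≤ 1)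
    (hexp : Real.exp (-(4 * μ)⁻¹) ≤ ρ) :
    ∃ Y : Finset ℝ, ↑Y ⊆ Flog ∧ (Y : Set ℝ).Pairwise (fun x y => ρ ≤ |x - y|) ∧
      μ / ρ ≤ Y.card := by
  obtain ⟨Y, hYF, hYsep, hYcard⟩ := exists_separated_finset_of_forall_near (A := Flog)
    (T := 4 * μ) hρ fun t ht => exists_mem_Flog_near ht.1 (ht.2.trans hμ)
      ((Real.exp_le_exp.mpr (neg_le_neg (inv_anti₀ ht.1 ht.2))).trans hexp)
  refine ⟨Y, hYF, hYsep, le_trans ?_ hYcard⟩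
  have : 1 ≤ μ / ρ := (one_le_div hρ).mpr hρμ
  calc μ / ρ ≤ 2 * (μ / ρ) - 1 := by linarith
    _ = 4 * μ / (2 * ρ) - 1 := by field_simp; ring

theorem rpow_bounds_of_mem_Icc {θ s δ d : ℝ} (hθ0 : 0 < θ) (hθ1 : θ ≤ 1) (hs1 : 1 ≤ s)
    (hs2 : s ≤ 1 + θ / (1 + θ)) (hδ0 : 0 < δ) (hδ1 : δ ≤ 1) (hρd : δ ^ (1 / θ) ≤ d)
    (hdδ : d ≤ δ) :
    d ^ (2 - s) ≤ δ ^ (1 / (1 + θ)) * δ ^ ((1 + θ / (1 + θ) - s) / 2) ∧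
      δ ^ (1 / (1 + θ)) * d ^ (1 - s) ≤ δ ^ ((1 + θ / (1 + θ) - s) / 2) := by
  set κ := 1 + θ / (1 + θ) - s with hκ_def
  have hκ : 0 ≤ κ := sub_nonneg.mpr hs2
  have hθ' : θ / (1 + θ) ≤ 1 := by rw [div_le_one (by linarith)]; linarith
  have hρ : 0 < δ ^ (1 / θ) := by positivity
  constructor
  · calc d ^ (2 - s) ≤ δ ^ (2 - s) :=
          Real.rpow_le_rpow (hρ.trans_le hρd).le hdδ (by linarith)
      _ = δ ^ (1 / (1 + θ)) * δ ^ κ := by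
          rw [← Real.rpow_add hδ0]; congr 1; rw [hκ_def]; field_simp; ring
      _ ≤ δ ^ (1 / (1 + θ)) * δ ^ (κ / 2) := mul_le_mul_of_nonneg_left
          (Real.rpow_le_rpow_of_exponent_ge hδ0 hδ1 (by linarith)) (by positivity)
  · calc δ ^ (1 / (1 + θ)) * d ^ (1 - s) ≤ δ ^ (1 / (1 + θ)) * (δ ^ (1 / θ)) ^ (1 - s) :=
          mul_le_mul_of_nonneg_left (Real.rpow_le_rpow_of_nonpos hρ hρd (by linarith))
            (by positivity)
      _ = δ ^ (κ / θ) := by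
          rw [← Real.rpow_mul hδ0.le, ← Real.rpow_add hδ0]; congr 1; rw [hκ_def]; field_simp; ring
      _ ≤ δ ^ (κ / 2) := Real.rpow_le_rpow_of_exponent_ge hδ0 hδ1
          (by rw [le_div_iff₀ hθ0]; nlinarith)

open scoped Classical in
theorem not_ICov_Fprod {θ s δ : ℝ} (hθ0 : 0 < θ) (hθ1 : θ ≤ 1) (hs1 : 1 < s)
    (hs2 : s < 1 + θ / (1 + θ)) (hδ0 : 0 < δ) (hδ1 : δ ≤ 1)
    (hμ : 4 * δ ^ ((1 + θ / (1 + θ) - s) / 2) ≤ 1)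
    (hexp : Real.exp (-(4 * δ ^ ((1 + θ / (1 + θ) - s) / 2))⁻¹) ≤ δ ^ (1 / θ)) :
    ¬ ICov Fprod s (δ ^ (1 / θ)) δ (1 / 100) := by
  set u := δ ^ (1 / (1 + θ))
  set ρ := δ ^ (1 / θ)
  set μ := δ ^ ((1 + θ / (1 + θ) - s) / 2)
  have hu : 0 < u := by positivity
  have hρ : 0 < ρ := by positivity
  have hθ' : θ / (1 + θ) ≤ 1 := by rw [div_le_one (by linarith)]; linarith
  have hρμ : ρ ≤ μ := (Real.rpow_le_self_of_le_one hδ0.le hδ1 (one_le_one_div hθ0 hθ1)).trans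
    (Real.self_le_rpow_of_le_one hδ0.le hδ1 (by linarith))
  obtain ⟨X, hXF, hXsep, hX⟩ := exists_F1_separated hu (Real.rpow_le_one hδ0.le hδ1 (by positivity))
  obtain ⟨Y, hYF, hYsep, hY⟩ := exists_Flog_separated hρ hρμ hμ hexp
  have hXY : (X ×ˢ Y).Nonempty := by
    refine Finset.Nonempty.product ?_ ?_ <;> rw [← Finset.card_pos, ← Nat.cast_pos (α := ℝ)]
    exacts [(inv_pos.mpr hu).trans_le hX, (div_pos (hρ.trans_le hρμ) hρ).trans_le hY]
  intro hcov
  have := one_le_mul_of_ICov (fun p : ℝ × ℝ => !₂[p.1, p.2]) (X ×ˢ Y)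
    (fun p hp => by
      obtain ⟨hpX, hpY⟩ := Finset.mem_product.mp hp
      exact ⟨by simpa using hXF hpX, by simpa using hYF hpY⟩) hXY (c := 99) (by norm_num) hρ
    (fun U d hρd hdδ hU => ?_) hcov
  · norm_num at this
  have hd : 0 < d := hρ.trans_le hρd
  obtain ⟨h2, h1⟩ := rpow_bounds_of_mem_Icc hθ0 hθ1 hs1.le hs2.le hδ0 hδ1 hρd hdδ
  calc (((X ×ˢ Y).filter fun p => !₂[p.1, p.2] ∈ U).card : ℝ)
      ≤ (2 * d / (u / 4) ^ 2 + 1) * (2 * d / ρ + 1) :=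
        card_filter_mem_product_le (by positivity) hρ hd.le hXsep hYsep fun z hz w hw =>
          (ENNReal.ofReal_le_ofReal_iff hd.le).mp
            (by rw [← edist_dist, ← hU]; exact EMetric.edist_le_diam_of_mem hz hw)
    _ ≤ 99 * d ^ s * (u⁻¹ * (μ / ρ)) := count_bound_of_rpow_le hu hρ hρd h2 h1
    _ ≤ 99 * d ^ s * (X ×ˢ Y).card := by rw [Finset.card_product, Nat.cast_mul]; gcongr

theorem eventually_exp_neg_inv_le_rpow {a b : ℝ} (ha : 0 < a) (hb : 0 < b) :
    ∀ᶠ δ in 𝓝[>] (0 : ℝ), Real.exp (-(4 * δ ^ a)⁻¹) ≤ δ ^ b := by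
  filter_upwards [self_mem_nhdsWithin, (tendsto_log_mul_rpow_nhdsGT_zero ha).eventually_const_le
      (neg_lt_zero.mpr (by positivity : 0 < (4 * b)⁻¹))] with δ (hδ : 0 < δ) hlog
  have hδa : 0 < δ ^ a := by positivity
  rw [Real.rpow_def_of_pos hδ b, Real.exp_le_exp]
  calc -(4 * δ ^ a)⁻¹ = -(4 * b)⁻¹ / δ ^ a * b := by field_simp
    _ ≤ Real.log δ * b := by gcongr; rwa [div_le_iff₀ hδa]

theorem eventually_not_ICov_Fprod {θ s : ℝ} (hθ0 : 0 < θ) (hθ1 : θ ≤ 1) (hs1 : 1 < s)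
    (hs2 : s < 1 + θ / (1 + θ)) :
    ∀ᶠ δ in 𝓝[>] 0, ¬ ICov Fprod s (δ ^ (1 / θ)) δ (1 / 100) := by
  have hκ : 0 < (1 + θ / (1 + θ) - s) / 2 := by linarith
  filter_upwards [self_mem_nhdsWithin, eventually_le_one_nhdsGT_zero,
    (tendsto_rpow_nhdsGT_zero hκ).eventually_le_const (by norm_num : (0 : ℝ) < 1 / 4),
    eventually_exp_neg_inv_le_rpow hκ (one_div_pos.mpr hθ0)] with δ (hδ0 : 0 < δ) hδ1 hμ hexp
  exact not_ICov_Fprod hθ0 hθ1 hs1 hs2 hδ0 hδ1 (by linarith) hexp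

end LowerBound

theorem stmt19 :
    (∀ θ ∈ Set.Ioc (0:ℝ) 1,
      lowerIDim Fprod θ = θ / (1 + θ) + 1 ∧ upperIDim Fprod θ = θ / (1 + θ) + 1) ∧
    dimH Fprod = 0 ∧ lowerBoxDim Fprod = 3 / 2 ∧ upperBoxDim Fprod = 3 / 2 := by
  have hdims : ∀ θ ∈ Set.Ioc (0:ℝ) 1,
      lowerIDim Fprod θ = θ / (1 + θ) + 1 ∧ upperIDim Fprod θ = θ / (1 + θ) + 1 := by
    rintro θ ⟨hθ0, hθ1⟩
    have hcrit : 0 < θ / (1 + θ) := by positivity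
    exact lowerIDim_eq_and_upperIDim_eq hθ0.ne' (c := 1) (by linarith) (by linarith)
      (fun s hs ε hε => eventually_ICov_Fprod hθ0 hθ1 (by linarith) hε)
      (fun s hs => ⟨1 / 100, by norm_num,
        eventually_not_ICov_Fprod hθ0 hθ1 hs.1 (by linarith [hs.2])⟩)
  obtain ⟨hlower, hupper⟩ := hdims 1 ⟨one_pos, le_rfl⟩
  refine ⟨hdims, dimH_countable (countable_planeProd countable_F1 countable_Flog), ?_, ?_⟩
  · rw [lowerBoxDim_eq_lowerIDim_one, hlower]; norm_num
  · rw [upperBoxDim_eq_upperIDim_one, hupper]; norm_num
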